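/- Let μ and ν be atomless probability measures on ℝ with finite first moments and K₂ < K₁ reals. Suppose there exists a martingale coupling π of μ and ν such that π({(x,y) : x < K₂ and y ≠ x}) = 0 and π({(x,y) : K₂ ≤ x ≤ K₁ and y < K₂}) = 0. Then the supremum of A(π',B) over all martingale couplings π' of μ and ν and all Borel sets B equals P_μ(K₁) + P_ν(K₂) − P_μ(K₂), and it is attained by π' = π with B = (−∞, K₁). -/

import Mathlib

open MeasureTheory Set

/-- The put price function `P_η(k) = ∫ (k-x)⁺ dη(x)`. -/
noncomputable def putPrice (η : Measure ℝ) (k : ℝ) : ℝ := ∫ x, max (k - x) 0 ∂η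

/-- `π` is a martingale coupling of `μ` and `ν`. -/
def IsMartingaleCoupling (μ ν : Measure ℝ) (π : Measure (ℝ × ℝ)) : Prop :=
  IsProbabilityMeasure π ∧ π.map Prod.fst = μ ∧ π.map Prod.snd = ν ∧
    ∀ B : Set ℝ, MeasurableSet B →
      ∫ p in B ×ˢ (Set.univ : Set ℝ), p.2 ∂π = ∫ x in B, x ∂μ

/-- The American-put payoff under coupling `π` and exercise set `B`. -/
noncomputable def amPayoff (K₁ K₂ : ℝ) (π : Measure (ℝ × ℝ)) (B : Set ℝ) : ℝ :=
  ∫ p, (B.indicator (fun x => max (K₁ - x) 0) p.1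
      + Bᶜ.indicator (fun _ => max (K₂ - p.2) 0) p.1) ∂π

/-!
Whatever the coupling and the exercise set `B`, the payoff of the American put is dominated
pointwise by the static portfolio `(K₁ - x)⁺ - (K₂ - x)⁺ + (K₂ - y)⁺` plus the gain
`(y - x) 1{x ∈ B, x < K₂}` of holding the underlying between the two dates. The martingale
property makes that gain worthless in expectation, so every payoff is at most the price
`P_μ(K₁) - P_μ(K₂) + P_ν(K₂)` of the portfolio. For `B = (-∞, K₁)` the domination is an
equality as soon as `y = x` when `x < K₂` and `y ≥ K₂` when `K₂ ≤ x ≤ K₁`, which is what the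
two null-set conditions on `π` say.
-/

noncomputable def superhedge (K₁ K₂ : ℝ) (p : ℝ × ℝ) : ℝ :=
  max (K₁ - p.1) 0 - max (K₂ - p.1) 0 + max (K₂ - p.2) 0

section Pointwise

variable {K₁ K₂ : ℝ} {B : Set ℝ} (p : ℝ × ℝ)

lemma americanPut_nonneg :
    0 ≤ B.indicator (fun x => max (K₁ - x) 0) p.1
      + Bᶜ.indicator (fun _ => max (K₂ - p.2) 0) p.1 :=
  add_nonneg (indicator_nonneg (fun _ _ => le_max_right _ _) _)
    (indicator_nonneg (fun _ _ => le_max_right _ _) _)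

lemma americanPut_le_superhedge_add (hK : K₂ ≤ K₁) :
    B.indicator (fun x => max (K₁ - x) 0) p.1 + Bᶜ.indicator (fun _ => max (K₂ - p.2) 0) p.1
      ≤ superhedge K₁ K₂ p + (Prod.fst ⁻¹' (B ∩ Iio K₂)).indicator (fun q => q.2 - q.1) p := by
  unfold superhedge indicator
  split_ifs <;> grind

lemma americanPut_Iio_eq_superhedge (hK : K₂ ≤ K₁) (hlow : p.1 < K₂ → p.2 = p.1)
    (hmid : K₂ ≤ p.1 → p.1 ≤ K₁ → K₂ ≤ p.2) :
    (Iio K₁).indicator (fun x => max (K₁ - x) 0) p.1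
      + (Iio K₁)ᶜ.indicator (fun _ => max (K₂ - p.2) 0) p.1 = superhedge K₁ K₂ p := by
  unfold superhedge indicator
  split_ifs <;> grind

end Pointwise

lemma amPayoff_Iio_eq_integral_superhedge {K₁ K₂ : ℝ} (hK : K₂ ≤ K₁) {π : Measure (ℝ × ℝ)}
    (h1 : π {p : ℝ × ℝ | p.1 < K₂ ∧ p.2 ≠ p.1} = 0)
    (h2 : π {p : ℝ × ℝ | K₂ ≤ p.1 ∧ p.1 ≤ K₁ ∧ p.2 < K₂} = 0) :
    amPayoff K₁ K₂ π (Iio K₁) = ∫ p, superhedge K₁ K₂ p ∂π := by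
  have hlow : ∀ᵐ p ∂π, p.1 < K₂ → p.2 = p.1 := by
    rw [ae_iff]; simpa using h1
  have hmid : ∀ᵐ p ∂π, K₂ ≤ p.1 → p.1 ≤ K₁ → K₂ ≤ p.2 := by
    rw [ae_iff]; simpa using h2
  refine integral_congr_ae ?_
  filter_upwards [hlow, hmid] with p using americanPut_Iio_eq_superhedge p hK

namespace IsMartingaleCoupling

variable {μ ν : Measure ℝ} {π : Measure (ℝ × ℝ)}

lemma integral_comp_fst (hπ : IsMartingaleCoupling μ ν π) {f : ℝ → ℝ}
    (hf : AEStronglyMeasurable f μ) :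
    ∫ p, f p.1 ∂π = ∫ x, f x ∂μ := by
  rw [← hπ.2.1] at hf ⊢
  exact (integral_map measurable_fst.aemeasurable hf).symm

lemma integral_comp_snd (hπ : IsMartingaleCoupling μ ν π) {f : ℝ → ℝ}
    (hf : AEStronglyMeasurable f ν) :
    ∫ p, f p.2 ∂π = ∫ x, f x ∂ν := by
  rw [← hπ.2.2.1] at hf ⊢
  exact (integral_map measurable_snd.aemeasurable hf).symm

lemma integrable_fst (hπ : IsMartingaleCoupling μ ν π) (hμ : Integrable (fun x => x) μ) :
    Integrable (fun p : ℝ × ℝ => p.1) π :=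
  (hπ.2.1 ▸ hμ).comp_measurable measurable_fst

lemma integrable_snd (hπ : IsMartingaleCoupling μ ν π) (hν : Integrable (fun x => x) ν) :
    Integrable (fun p : ℝ × ℝ => p.2) π :=
  (hπ.2.2.1 ▸ hν).comp_measurable measurable_snd

lemma setIntegral_snd_sub_fst_eq_zero (hπ : IsMartingaleCoupling μ ν π)
    (hμ : Integrable (fun x => x) μ) (hν : Integrable (fun x => x) ν)
    {B : Set ℝ} (hB : MeasurableSet B) :
    ∫ p in Prod.fst ⁻¹' B, (p.2 - p.1) ∂π = 0 := by
  have hfst : ∫ p in Prod.fst ⁻¹' B, p.1 ∂π = ∫ x in B, x ∂μ := by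
    rw [← hπ.2.1]
    exact (setIntegral_map hB aestronglyMeasurable_id measurable_fst.aemeasurable).symm
  have hsnd : ∫ p in Prod.fst ⁻¹' B, p.2 ∂π = ∫ x in B, x ∂μ := by
    rw [← prod_univ]; exact hπ.2.2.2 B hB
  rw [integral_sub (hπ.integrable_snd hν).integrableOn (hπ.integrable_fst hμ).integrableOn,
    hfst, hsnd, sub_self]

lemma integrable_put_fst (hπ : IsMartingaleCoupling μ ν π) (hμ : Integrable (fun x => x) μ)
    (k : ℝ) : Integrable (fun p : ℝ × ℝ => max (k - p.1) 0) π :=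
  have := hπ.1
  ((integrable_const k).sub (hπ.integrable_fst hμ)).pos_part

lemma integrable_put_snd (hπ : IsMartingaleCoupling μ ν π) (hν : Integrable (fun x => x) ν)
    (k : ℝ) : Integrable (fun p : ℝ × ℝ => max (k - p.2) 0) π :=
  have := hπ.1
  ((integrable_const k).sub (hπ.integrable_snd hν)).pos_part

lemma integrable_superhedge (hπ : IsMartingaleCoupling μ ν π) (hμ : Integrable (fun x => x) μ)
    (hν : Integrable (fun x => x) ν) (K₁ K₂ : ℝ) : Integrable (superhedge K₁ K₂) π :=
  ((hπ.integrable_put_fst hμ K₁).sub (hπ.integrable_put_fst hμ K₂)).add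
    (hπ.integrable_put_snd hν K₂)

lemma integral_superhedge (hπ : IsMartingaleCoupling μ ν π) (hμ : Integrable (fun x => x) μ)
    (hν : Integrable (fun x => x) ν) (K₁ K₂ : ℝ) :
    ∫ p, superhedge K₁ K₂ p ∂π = putPrice μ K₁ + putPrice ν K₂ - putPrice μ K₂ := by
  have put_meas (k : ℝ) {η : Measure ℝ} : AEStronglyMeasurable (fun x : ℝ => max (k - x) 0) η :=
    (by fun_prop : Continuous fun x : ℝ => max (k - x) 0).aestronglyMeasurable
  have put_spread : Integrable (fun p : ℝ × ℝ => max (K₁ - p.1) 0 - max (K₂ - p.1) 0) π :=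
    (hπ.integrable_put_fst hμ K₁).sub (hπ.integrable_put_fst hμ K₂)
  simp only [superhedge]
  rw [integral_add put_spread (hπ.integrable_put_snd hν K₂),
    integral_sub (hπ.integrable_put_fst hμ K₁) (hπ.integrable_put_fst hμ K₂),
    hπ.integral_comp_fst (put_meas K₁), hπ.integral_comp_fst (put_meas K₂),
    hπ.integral_comp_snd (put_meas K₂), putPrice, putPrice, putPrice]
  ring

lemma amPayoff_le_integral_superhedge (hπ : IsMartingaleCoupling μ ν π)
    (hμ : Integrable (fun x => x) μ) (hν : Integrable (fun x => x) ν) {K₁ K₂ : ℝ}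
    (hK : K₂ ≤ K₁) {B : Set ℝ} (hB : MeasurableSet B) :
    amPayoff K₁ K₂ π B ≤ ∫ p, superhedge K₁ K₂ p ∂π := by
  have hB' : MeasurableSet (B ∩ Iio K₂) := hB.inter measurableSet_Iio
  have superhedge_int := hπ.integrable_superhedge hμ hν K₁ K₂
  have gain_int : Integrable
      ((Prod.fst ⁻¹' (B ∩ Iio K₂)).indicator fun p : ℝ × ℝ => p.2 - p.1) π :=
    ((hπ.integrable_snd hν).sub (hπ.integrable_fst hμ)).indicator (measurable_fst hB')
  calc amPayoff K₁ K₂ π B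
      ≤ ∫ p, (superhedge K₁ K₂ p
          + (Prod.fst ⁻¹' (B ∩ Iio K₂)).indicator (fun q => q.2 - q.1) p) ∂π :=
        integral_mono_of_nonneg (ae_of_all _ americanPut_nonneg) (superhedge_int.add gain_int)
          (ae_of_all _ fun p => americanPut_le_superhedge_add p hK)
    _ = ∫ p, superhedge K₁ K₂ p ∂π := by
        rw [integral_add superhedge_int gain_int, integral_indicator (measurable_fst hB'),
          hπ.setIntegral_snd_sub_fst_eq_zero hμ hν hB', add_zero]

end IsMartingaleCoupling

theorem optimal_model_deep_strikes_general
    (μ ν : Measure ℝ)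
    (hμint : Integrable (fun w => w) μ) (hνint : Integrable (fun w => w) ν)
    (K₁ K₂ : ℝ) (hK : K₂ < K₁)
    (π : Measure (ℝ × ℝ)) (hπ : IsMartingaleCoupling μ ν π)
    (h1 : π {p : ℝ × ℝ | p.1 < K₂ ∧ p.2 ≠ p.1} = 0)
    (h2 : π {p : ℝ × ℝ | K₂ ≤ p.1 ∧ p.1 ≤ K₁ ∧ p.2 < K₂} = 0) :
    sSup { r : ℝ | ∃ π' : Measure (ℝ × ℝ), ∃ B : Set ℝ,
        IsMartingaleCoupling μ ν π' ∧ MeasurableSet B ∧ r = amPayoff K₁ K₂ π' B }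
      = putPrice μ K₁ + putPrice ν K₂ - putPrice μ K₂ ∧
    amPayoff K₁ K₂ π (Set.Iio K₁)
      = putPrice μ K₁ + putPrice ν K₂ - putPrice μ K₂ := by
  have attained :
      amPayoff K₁ K₂ π (Iio K₁) = putPrice μ K₁ + putPrice ν K₂ - putPrice μ K₂ := by
    rw [amPayoff_Iio_eq_integral_superhedge hK.le h1 h2, hπ.integral_superhedge hμint hνint]
  refine ⟨IsGreatest.csSup_eq ⟨⟨π, Iio K₁, hπ, measurableSet_Iio, attained.symm⟩, ?_⟩, attained⟩
  rintro _ ⟨π', B, hπ', hB, rfl⟩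
  exact (hπ'.amPayoff_le_integral_superhedge hμint hνint hK.le hB).trans_eq
    (hπ'.integral_superhedge hμint hνint K₁ K₂)

/-- If there is a martingale coupling keeping mass below `K₂` constant and sending no
mass from `[K₂, K₁]` below `K₂`, the highest American-put price equals
`P_μ(K₁) + P_ν(K₂) - P_μ(K₂)`, attained by that coupling with exercise set `(-∞, K₁)`. -/
theorem optimal_model_deep_strikes
    (μ ν : Measure ℝ) [IsProbabilityMeasure μ] [IsProbabilityMeasure ν]
    (hμint : Integrable (fun w => w) μ) (hνint : Integrable (fun w => w) ν)
    (hμa : ∀ w : ℝ, μ {w} = 0) (hνa : ∀ w : ℝ, ν {w} = 0)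
    (K₁ K₂ : ℝ) (hK : K₂ < K₁)
    (π : Measure (ℝ × ℝ)) (hπ : IsMartingaleCoupling μ ν π)
    (h1 : π {p : ℝ × ℝ | p.1 < K₂ ∧ p.2 ≠ p.1} = 0)
    (h2 : π {p : ℝ × ℝ | K₂ ≤ p.1 ∧ p.1 ≤ K₁ ∧ p.2 < K₂} = 0) :
    sSup { r : ℝ | ∃ π' : Measure (ℝ × ℝ), ∃ B : Set ℝ,
        IsMartingaleCoupling μ ν π' ∧ MeasurableSet B ∧ r = amPayoff K₁ K₂ π' B }
      = putPrice μ K₁ + putPrice ν K₂ - putPrice μ K₂ ∧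
    amPayoff K₁ K₂ π (Set.Iio K₁)
      = putPrice μ K₁ + putPrice ν K₂ - putPrice μ K₂ :=
  optimal_model_deep_strikes_general μ ν hμint hνint K₁ K₂ hK π hπ h1 h2
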